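/- Let X and Y be topological spaces, X₁ ⊆ X and Y₁ ⊆ Y subsets such that every continuous function from X₁ (resp. Y₁) to [0,1] extends to a continuous function on X (resp. Y). Let e : X₁ → Y₁ be a homeomorphism, E = {(x, e(x)) : x ∈ X₁} ⊆ X × Y, and g : E → [-1,1] a continuous function. Then there exist continuous functions f, h : X × Y → [-1,1] such that (i) f restricted to E equals g; (ii) h vanishes on E; (iii) for all x', x'' ∈ X and y', y'' ∈ Y, if x' = x'' or y' = y'', then |f(x',y') − f(x'',y'')| = |h(x',y') − h(x'',y'')|. -/
import Mathlib


open Set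

theorem stmt0 {X Y : Type*} [TopologicalSpace X] [TopologicalSpace Y]
    (X₁ : Set X) (Y₁ : Set Y)
    (hX₁ : ∀ u : X₁ → ℝ, Continuous u → (∀ a, u a ∈ Icc (0:ℝ) 1) →
      ∃ v : X → ℝ, Continuous v ∧ (∀ x, v x ∈ Icc (0:ℝ) 1) ∧ ∀ a : X₁, v a = u a)
    (hY₁ : ∀ u : Y₁ → ℝ, Continuous u → (∀ b, u b ∈ Icc (0:ℝ) 1) →
      ∃ v : Y → ℝ, Continuous v ∧ (∀ y, v y ∈ Icc (0:ℝ) 1) ∧ ∀ b : Y₁, v b = u b)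
    (e : X₁ ≃ₜ Y₁)
    (E : Set (X × Y)) (hE : E = {p : X × Y | ∃ x : X₁, p = ((x : X), (e x : Y))})
    (g : E → ℝ) (hg : Continuous g) (hg1 : ∀ p : E, g p ∈ Icc (-1:ℝ) 1) :
    ∃ f h : X × Y → ℝ, Continuous f ∧ Continuous h ∧
      (∀ p, f p ∈ Icc (-1:ℝ) 1) ∧ (∀ p, h p ∈ Icc (-1:ℝ) 1) ∧
      (∀ p : E, f p = g p) ∧
      (∀ p ∈ E, h p = 0) ∧
      (∀ x' x'' : X, ∀ y' y'' : Y, (x' = x'' ∨ y' = y'') →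
        |f (x', y') - f (x'', y'')| = |h (x', y') - h (x'', y'')|) := by
  have memφ : ∀ a : X₁, ((a : X), (e a : Y)) ∈ E := by
    intro a; rw [hE]; exact ⟨a, rfl⟩
  have memψ : ∀ b : Y₁, ((e.symm b : X), (b : Y)) ∈ E := by
    intro b; rw [hE]; exact ⟨e.symm b, by simp⟩
  set φ : X₁ → E := fun a => ⟨((a : X), (e a : Y)), memφ a⟩ with hφ
  set ψ : Y₁ → E := fun b => ⟨((e.symm b : X), (b : Y)), memψ b⟩ with hψ
  have hφc : Continuous φ := by
    apply Continuous.subtype_mk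
    exact continuous_subtype_val.prodMk (continuous_subtype_val.comp e.continuous)
  have hψc : Continuous ψ := by
    apply Continuous.subtype_mk
    exact (continuous_subtype_val.comp e.symm.continuous).prodMk continuous_subtype_val
  obtain ⟨v₁, hv₁c, hv₁m, hv₁e⟩ := hX₁ (fun a => (g (φ a) + 1) / 2)
    (((hg.comp hφc).add continuous_const).div_const 2)
    (by intro a; have := hg1 (φ a); constructor <;> [linarith [this.1]; linarith [this.2]])
  obtain ⟨v₂, hv₂c, hv₂m, hv₂e⟩ := hY₁ (fun b => (g (ψ b) + 1) / 2)
    (((hg.comp hψc).add continuous_const).div_const 2)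
    (by intro b; have := hg1 (ψ b); constructor <;> [linarith [this.1]; linarith [this.2]])
  set k : X → ℝ := fun x => 2 * v₁ x - 1 with hk
  set l : Y → ℝ := fun y => 2 * v₂ y - 1 with hl
  have hkE : ∀ p : E, k p.1.1 = g p := by
    intro p
    obtain ⟨x, hx⟩ : ∃ x : X₁, (p : X × Y) = ((x : X), (e x : Y)) := hE.le p.2
    have hpx : p.1.1 = (x : X) := by rw [hx]
    have hpφ : φ x = p := Subtype.ext hx.symm
    rw [hpx]
    have := hv₁e x
    simp only [hk]
    rw [this, hpφ]; ring
  have hlE : ∀ p : E, l p.1.2 = g p := by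
    intro p
    obtain ⟨x, hx⟩ : ∃ x : X₁, (p : X × Y) = ((x : X), (e x : Y)) := hE.le p.2
    have hpy : p.1.2 = (e x : Y) := by rw [hx]
    have hpψ : ψ (e x) = p := by
      apply Subtype.ext
      simp only [hψ]
      rw [hx]; simp
    rw [hpy]
    have := hv₂e (e x)
    simp only [hl]
    rw [this, hpψ]; ring
  refine ⟨fun p => (k p.1 + l p.2) / 2, fun p => (k p.1 - l p.2) / 2, ?_, ?_, ?_, ?_, ?_, ?_, ?_⟩
  · fun_prop
  · fun_prop
  · intro p
    have h1 := hv₁m p.1; have h2 := hv₂m p.2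
    simp only [hk, hl]
    constructor <;> [linarith [h1.1, h2.1]; linarith [h1.2, h2.2]]
  · intro p
    have h1 := hv₁m p.1; have h2 := hv₂m p.2
    simp only [hk, hl]
    constructor <;> [linarith [h1.1, h2.2]; linarith [h1.2, h2.1]]
  · intro p
    have h1 := hkE p; have h2 := hlE p
    show (k (p : X × Y).1 + l (p : X × Y).2) / 2 = g p
    rw [h1, h2]; ring
  · intro p hp
    have h1 := hkE ⟨p, hp⟩; have h2 := hlE ⟨p, hp⟩
    show (k p.1 - l p.2) / 2 = 0
    rw [h1, h2]; ring
  · rintro x' x'' y' y'' (rfl | rfl)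
    · have : (k x' + l y') / 2 - (k x' + l y'') / 2 =
        -((k x' - l y') / 2 - (k x' - l y'') / 2) := by ring
      rw [this, abs_neg]
    · have : (k x' + l y') / 2 - (k x'' + l y') / 2 =
        (k x' - l y') / 2 - (k x'' - l y') / 2 := by ring
      rw [this]
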